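/- If D is a minimal alphabet of period k (a k-periodic alphabet with no proper periodic subalphabet) and D → E in the graph G, then E is a minimal alphabet of period k. -/
import Mathlib


open List
open scoped Classical

namespace SubstPaper

variable {A : Type*}

/-- Apply a substitution letterwise to a word. -/
def applyW (σ : A → List A) (u : List A) : List A := u.flatMap σ

/-- `n`-th iterate of a substitution on a word. -/
def iterW (σ : A → List A) (n : ℕ) (u : List A) : List A := (applyW σ)^[n] u

/-- Non-erasing substitution. -/
def NonErasing (σ : A → List A) : Prop := ∀ a, σ a ≠ []

/-- A letter is bounded if the lengths of its iterated images stay bounded. -/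
def IsBounded (σ : A → List A) (a : A) : Prop := ∃ K, ∀ n, (iterW σ n [a]).length ≤ K

/-- A letter is growing if it is not bounded. -/
def IsGrowing (σ : A → List A) (a : A) : Prop := ¬ IsBounded σ a

/-- The prefix of `u` consisting of bounded letters, before the first growing letter. -/
noncomputable def LBw (σ : A → List A) (u : List A) : List A :=
  u.takeWhile (fun a => decide (IsBounded σ a))

/-- The first growing letter of `u` (junk value if none). -/
noncomputable def LCw [Inhabited A] (σ : A → List A) (u : List A) : A :=
  (u.dropWhile (fun a => decide (IsBounded σ a))).headI

/-- The bounded suffix of `u`, after the last growing letter. -/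
noncomputable def RBw (σ : A → List A) (u : List A) : List A :=
  (LBw σ u.reverse).reverse

/-- The last growing letter of `u` (junk value if none). -/
noncomputable def RCw [Inhabited A] (σ : A → List A) (u : List A) : A :=
  LCw σ u.reverse

/-- Growing letters occurring in a word. -/
def alphC (σ : A → List A) (u : List A) : Set A := {c | IsGrowing σ c ∧ c ∈ u}

/-- The map on alphabets induced by the substitution: `D ↦ ⋃_{a ∈ D} alph_C(σ(a))`. -/
def FAlph (σ : A → List A) (D : Set A) : Set A := ⋃ a ∈ D, alphC σ (σ a)

/-- `D` is a `k`-periodic alphabet: nonempty set of growing letters, `k` least positive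
with `F^[k] D = D`. -/
def IsKPeriodicAlph (σ : A → List A) (D : Set A) (k : ℕ) : Prop :=
  D.Nonempty ∧ (∀ a ∈ D, IsGrowing σ a) ∧ 0 < k ∧ (FAlph σ)^[k] D = D ∧
    ∀ j, 0 < j → (FAlph σ)^[j] D = D → k ≤ j

/-- `D` is a minimal alphabet: periodic with no proper nonempty periodic subalphabet. -/
def IsMinimalAlph (σ : A → List A) (D : Set A) : Prop :=
  (∃ k, IsKPeriodicAlph σ D k) ∧
    ∀ D' ⊆ D, D'.Nonempty → (∃ k', IsKPeriodicAlph σ D' k') → D' = D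

/-- The finite word `u` occurs in the bi-infinite word `x`. -/
def OccursIn (x : ℤ → A) (u : List A) : Prop :=
  ∃ i : ℤ, ∀ j : Fin u.length, x (i + j.1) = u.get j

/-- The substitution subshift `X_σ`. -/
def Xsub (σ : A → List A) : Set (ℤ → A) :=
  {x | ∀ u, OccursIn x u → ∃ a n, u <:+: iterW σ n [a]}

/-- The left shift on bi-infinite words. -/
def shiftT (x : ℤ → A) : ℤ → A := fun i => x (i + 1)

/-- A subshift: nonempty, closed, shift-invariant. -/
def IsSubshift [TopologicalSpace A] (X : Set (ℤ → A)) : Prop :=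
  X.Nonempty ∧ IsClosed X ∧ shiftT '' X = X

/-- A minimal subshift: contains no proper subshift. -/
def IsMinimalSubshift [TopologicalSpace A] (X : Set (ℤ → A)) : Prop :=
  IsSubshift X ∧ ∀ Y ⊆ X, IsSubshift Y → Y = X

/-- The periodic bi-infinite word `ωuω`. -/
noncomputable def perWord [Inhabited A] (u : List A) : ℤ → A :=
  fun i => u.getD ((i % (u.length : ℤ)).toNat) default

/-- The shift-orbit closure `X(x)` of a bi-infinite word. -/
def orbitClosure [TopologicalSpace A] (x : ℤ → A) : Set (ℤ → A) :=
  closure {y | ∃ k : ℤ, ∀ i, y i = x (i + k)}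

/-- `x` is the letterwise image of `y` under `σ`, with the origin at the image of
position `0`. -/
def IsSubstImage (σ : A → List A) (y x : ℤ → A) : Prop :=
  ∃ c : ℤ → ℤ, c 0 = 0 ∧ (∀ i, c (i + 1) = c i + (σ (y i)).length) ∧
    ∀ i : ℤ, ∀ j : Fin (σ (y i)).length, x (c i + j.1) = (σ (y i)).get j

/-- The induced map `σ̃` on subshifts: all shifts of images of elements of `X`. -/
def tildeS (σ : A → List A) (X : Set (ℤ → A)) : Set (ℤ → A) :=
  {z | ∃ x ∈ X, ∃ k : ℤ, IsSubstImage σ x (fun i => z (i + k))}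

/-- Growing letters occurring in some element of `X`. -/
def alphCX (σ : A → List A) (X : Set (ℤ → A)) : Set A :=
  {c | IsGrowing σ c ∧ ∃ x ∈ X, ∃ i : ℤ, x i = c}

/-- The subshift of the restriction `σᵏ|_E` (words whose factors occur in some
`σ^{kn}(a)`, `a ∈ E`). -/
def Xrestr (σ : A → List A) (E : Set A) (k : ℕ) : Set (ℤ → A) :=
  {x | ∀ u, OccursIn x u → ∃ a ∈ E, ∃ n, u <:+: iterW σ (k * n) [a]}

/-- A growing letter `c` is left-isolated: `σⁿ(c) = u c v` with `u` nonempty bounded. -/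
def LeftIsolated (σ : A → List A) (c : A) : Prop :=
  IsGrowing σ c ∧ ∃ n, 1 ≤ n ∧ ∃ u v : List A, u ≠ [] ∧ (∀ b ∈ u, IsBounded σ b) ∧
    iterW σ n [c] = u ++ c :: v

/-- A growing letter `c` is right-isolated: `σⁿ(c) = v c u` with `u` nonempty bounded. -/
def RightIsolated (σ : A → List A) (c : A) : Prop :=
  IsGrowing σ c ∧ ∃ n, 1 ≤ n ∧ ∃ u v : List A, u ≠ [] ∧ (∀ b ∈ u, IsBounded σ b) ∧
    iterW σ n [c] = v ++ c :: u

/-- Growing letter that is neither left- nor right-isolated (member of `C_niso`). -/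
def NonIsolated (σ : A → List A) (c : A) : Prop :=
  IsGrowing σ c ∧ ¬ LeftIsolated σ c ∧ ¬ RightIsolated σ c

/-- A periodic letter: bounded, and occurring in some `σⁿ(a)`, `n ≥ 1`. -/
def IsPeriodicLetter (σ : A → List A) (a : A) : Prop :=
  IsBounded σ a ∧ ∃ n, 1 ≤ n ∧ [a] <:+: iterW σ n [a]

/-- `(a,u,b)` is a 1-block of the word `w`. -/
def Is1Block (σ : A → List A) (w : List A) (t : A × List A × A) : Prop :=
  IsGrowing σ t.1 ∧ IsGrowing σ t.2.2 ∧ (∀ x ∈ t.2.1, IsBounded σ x) ∧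
    (t.1 :: (t.2.1 ++ [t.2.2])) <:+: w

/-- The descendant map on 1-blocks. -/
noncomputable def Desc [Inhabited A] (σ : A → List A) : A × List A × A → A × List A × A :=
  fun t => (RCw σ (σ t.1), RBw σ (σ t.1) ++ applyW σ t.2.1 ++ LBw σ (σ t.2.2), LCw σ (σ t.2.2))

/-- The bi-infinite word `ωu.wvω`. -/
noncomputable def biWord [Inhabited A] (u w v : List A) : ℤ → A := fun i =>
  if i < 0 then u.getD ((i % (u.length : ℤ)).toNat) default
  else if i < (w.length : ℤ) then w.getD i.toNat default
  else v.getD (((i - (w.length : ℤ)) % (v.length : ℤ)).toNat) default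

lemma applyW_append' (σ : A → List A) (u v : List A) :
    applyW σ (u ++ v) = applyW σ u ++ applyW σ v := by
  simp [applyW]

lemma iterW_append' (σ : A → List A) (n : ℕ) (u v : List A) :
    iterW σ n (u ++ v) = iterW σ n u ++ iterW σ n v := by
  induction n generalizing u v with
  | zero => rfl
  | succ n ih =>
      simp only [iterW, Function.iterate_succ_apply] at *
      rw [applyW_append']; exact ih _ _

lemma iterW_nil' (σ : A → List A) (n : ℕ) : iterW σ n [] = [] := by
  induction n with
  | zero => rfl
  | succ n ih =>
      simp only [iterW, Function.iterate_succ_apply] at *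
      simpa [applyW] using ih

lemma bounded_of_all_bounded (σ : A → List A) :
    ∀ u : List A, (∀ b ∈ u, IsBounded σ b) → ∃ K, ∀ n, (iterW σ n u).length ≤ K := by
  intro u
  induction u with
  | nil => intro _; exact ⟨0, fun n => by simp [iterW_nil']⟩
  | cons b t ih =>
      intro h
      obtain ⟨K1, hK1⟩ := h b (by simp)
      obtain ⟨K2, hK2⟩ := ih (fun x hx => h x (by simp [hx]))
      refine ⟨K1 + K2, fun n => ?_⟩
      have : (b :: t) = [b] ++ t := rfl
      rw [this, iterW_append']
      simpa using Nat.add_le_add (hK1 n) (hK2 n)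

lemma growing_image (σ : A → List A) {a : A} (ha : IsGrowing σ a) :
    ∃ c, IsGrowing σ c ∧ c ∈ σ a := by
  by_contra h
  push_neg at h
  have hb : ∀ b ∈ σ a, IsBounded σ b := fun b hb => not_not.mp (h b · hb)
  obtain ⟨K, hK⟩ := bounded_of_all_bounded σ (σ a) hb
  refine ha ⟨max K 1, fun n => ?_⟩
  cases n with
  | zero => simp [iterW]
  | succ n =>
      have h1 : iterW σ (n + 1) [a] = iterW σ n (σ a) := by
        simp [iterW, Function.iterate_succ_apply, applyW]
      rw [h1]
      exact le_trans (hK n) (le_max_left _ _)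

lemma FAlph_growing (σ : A → List A) (D : Set A) :
    ∀ c ∈ FAlph σ D, IsGrowing σ c := by
  intro c hc
  simp only [FAlph, Set.mem_iUnion] at hc
  obtain ⟨a, _, hg, _⟩ := hc
  exact hg

lemma FAlph_nonempty (σ : A → List A) {D : Set A} (hne : D.Nonempty)
    (hg : ∀ a ∈ D, IsGrowing σ a) : (FAlph σ D).Nonempty := by
  obtain ⟨a, ha⟩ := hne
  obtain ⟨c, hc, hcm⟩ := growing_image σ (hg a ha)
  exact ⟨c, Set.mem_iUnion.mpr ⟨a, Set.mem_iUnion.mpr ⟨ha, hc, hcm⟩⟩⟩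

lemma FAlph_mono (σ : A → List A) {D D' : Set A} (h : D' ⊆ D) :
    FAlph σ D' ⊆ FAlph σ D := by
  intro c hc
  simp only [FAlph, Set.mem_iUnion] at hc ⊢
  obtain ⟨a, ha, hca⟩ := hc
  exact ⟨a, h ha, hca⟩

lemma FAlph_iter_mono (σ : A → List A) (n : ℕ) {D D' : Set A} (h : D' ⊆ D) :
    (FAlph σ)^[n] D' ⊆ (FAlph σ)^[n] D := by
  induction n generalizing D D' with
  | zero => exact h
  | succ n ih =>
      rw [Function.iterate_succ_apply, Function.iterate_succ_apply]
      exact ih (FAlph_mono σ h)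

lemma FAlph_iter_nonempty (σ : A → List A) (n : ℕ) {D : Set A} (hne : D.Nonempty)
    (hg : ∀ a ∈ D, IsGrowing σ a) :
    ((FAlph σ)^[n] D).Nonempty ∧ ∀ a ∈ (FAlph σ)^[n] D, IsGrowing σ a := by
  induction n with
  | zero => exact ⟨hne, hg⟩
  | succ n ih =>
      rw [Function.iterate_succ_apply']
      exact ⟨FAlph_nonempty σ ih.1 ih.2, FAlph_growing σ _⟩

lemma exists_minimal_period (σ : A → List A) {D : Set A} (hne : D.Nonempty)
    (hg : ∀ a ∈ D, IsGrowing σ a) (hper : ∃ j, 0 < j ∧ (FAlph σ)^[j] D = D) :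
    ∃ k, IsKPeriodicAlph σ D k := by
  classical
  refine ⟨Nat.find hper, hne, hg, (Nat.find_spec hper).1, (Nat.find_spec hper).2,
    fun j hj hjD => Nat.find_min' hper ⟨hj, hjD⟩⟩

lemma FAlph_iter_mul_fixed (σ : A → List A) {D : Set A} {k : ℕ}
    (h : (FAlph σ)^[k] D = D) (m : ℕ) : (FAlph σ)^[k * m] D = D := by
  rw [Function.iterate_mul]
  exact Function.iterate_fixed h m

/-- If `D` is a minimal alphabet of period `k` and `D → E`, then `E` is a minimal
alphabet of period `k`. -/
theorem stmt5 [Fintype A] (σ : A → List A) (hσ : NonErasing σ)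
    (D : Set A) (k : ℕ) (hk : IsKPeriodicAlph σ D k) (hmin : IsMinimalAlph σ D)
    (E : Set A) (hE : E = FAlph σ D) :
    IsKPeriodicAlph σ E k ∧ IsMinimalAlph σ E := by
  obtain ⟨hDne, hDg, hkpos, hkfix, hkmin⟩ := hk
  have hEne : E.Nonempty := hE ▸ FAlph_nonempty σ hDne hDg
  have hEg : ∀ a ∈ E, IsGrowing σ a := hE ▸ FAlph_growing σ D
  have hEfix : (FAlph σ)^[k] E = E := by
    rw [hE, ← Function.iterate_succ_apply, Function.iterate_succ_apply', hkfix]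
  have hEmin : ∀ j, 0 < j → (FAlph σ)^[j] E = E → k ≤ j := by
    intro j hj hjE
    have h2 : (FAlph σ)^[j + k] D = D := by
      calc (FAlph σ)^[j + k] D = (FAlph σ)^[(k - 1) + (j + 1)] D := by congr 1; omega
        _ = (FAlph σ)^[k - 1] ((FAlph σ)^[j + 1] D) := Function.iterate_add_apply _ _ _ _
        _ = (FAlph σ)^[k - 1] ((FAlph σ)^[j] (FAlph σ D)) := by
              rw [Function.iterate_succ_apply]
        _ = (FAlph σ)^[k - 1] (FAlph σ D) := by rw [← hE, hjE, hE]
        _ = (FAlph σ)^[(k - 1) + 1] D := by rw [Function.iterate_succ_apply]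
        _ = (FAlph σ)^[k] D := by congr 1; omega
        _ = D := hkfix
    have h1 : (FAlph σ)^[j] D = D := by
      calc (FAlph σ)^[j] D = (FAlph σ)^[j] ((FAlph σ)^[k] D) := by rw [hkfix]
        _ = (FAlph σ)^[j + k] D := (Function.iterate_add_apply _ _ _ _).symm
        _ = D := h2
    exact hkmin j hj h1
  have hEper : IsKPeriodicAlph σ E k := ⟨hEne, hEg, hkpos, hEfix, hEmin⟩
  refine ⟨hEper, ⟨k, hEper⟩, ?_⟩
  intro E' hE'sub hE'ne hE'per
  set k' := hE'per.choose with hk'def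
  obtain ⟨hk'ne, hk'g, hk'pos, hk'fix, -⟩ := hE'per.choose_spec
  have hmul : 0 < k * k' := Nat.mul_pos hkpos hk'pos
  set j := k * k' - 1 with hjdef
  set D' := (FAlph σ)^[j] E' with hD'def
  -- D' ⊆ D
  have hD'sub : D' ⊆ D := by
    have h1 : D' ⊆ (FAlph σ)^[j] E := FAlph_iter_mono σ j hE'sub
    have h2 : (FAlph σ)^[j] E = D := by
      rw [hE, ← Function.iterate_succ_apply]
      have hjs : j.succ = k * k' := by omega
      rw [hjs]
      exact FAlph_iter_mul_fixed σ hkfix k'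
    exact h2 ▸ h1
  have hD'ne := FAlph_iter_nonempty σ j hE'ne (fun a ha => hEg a (hE'sub ha))
  -- D' is periodic
  have hD'fix : (FAlph σ)^[k'] D' = D' := by
    calc (FAlph σ)^[k'] ((FAlph σ)^[j] E') = (FAlph σ)^[k' + j] E' :=
          (Function.iterate_add_apply _ _ _ _).symm
      _ = (FAlph σ)^[j + k'] E' := by congr 1; omega
      _ = (FAlph σ)^[j] ((FAlph σ)^[k'] E') := Function.iterate_add_apply _ _ _ _
      _ = (FAlph σ)^[j] E' := by rw [hk'fix]
  have hD'eq : D' = D :=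
    hmin.2 D' hD'sub hD'ne.1
      (exists_minimal_period σ hD'ne.1 hD'ne.2 ⟨k', hk'pos, hD'fix⟩)
  -- conclude E' = E
  have hE'fix2 : (FAlph σ)^[k' * k] E' = E' := FAlph_iter_mul_fixed σ hk'fix k
  calc E' = (FAlph σ)^[k' * k] E' := hE'fix2.symm
    _ = (FAlph σ)^[j + 1] E' := by congr 1; rw [mul_comm]; omega
    _ = FAlph σ ((FAlph σ)^[j] E') := Function.iterate_succ_apply' _ _ _
    _ = FAlph σ D := by rw [← hD'def, hD'eq]
    _ = E := hE.symm

end SubstPaper
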